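/- In the setting of Lemma 5.4 of the paper: let A be generated by a', x', y' with x'a' = qa'x', y'a' = q^{-1}a'y', a'^n = 1, x'^n = y'^n = 0, y'x' - q^{-n₁}x'y' = a'^{2n₁} - γ for a scalar γ. If m₀ satisfies y'm₀ = 0 and a'm₀ = q^i m₀, then for all u ≥ 1, y' x'^u m₀ = ((1 - q^{-un₁})/(1 - q^{-n₁})) (q^{(2i-u+1)n₁} - γ) x'^{u-1} m₀. -/

import Mathlib

/-!
Since `a'` scales `x'` by `q⁻¹` under commutation, each `x'^v m₀` is an `a'`-eigenvector with
eigenvalue `q^i q^{-v}`. Writing `s = q^{-n₁}`, the relation `y'x' = s x'y' + (a'^{2n₁} - γ)`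
moves `y'` past one `x'` at a time, and `y'm₀ = 0` leaves
`y' x'^{v+1} m₀ = ∑_{k ≤ v} s^{v-k} (q^{2in₁} s^{2k} - γ) x'^v m₀`,
which factors as `(1 + s + ⋯ + s^v)(q^{2in₁} s^v - γ) x'^v m₀`.
-/

open Finset

section Lowering

variable {K A M : Type*} [CommRing K] [Ring A] [Algebra K A]
  [AddCommGroup M] [Module A M] [Module K M] [IsScalarTower K A M]

lemma pow_smul_of_smul_eq {b : A} {c : K} {m : M} (h : b • m = c • m) (k : ℕ) :
    b ^ k • m = c ^ k • m := by
  induction k with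
  | zero => simp
  | succ k ih => rw [pow_succ, mul_smul, h, smul_comm, ih, smul_smul, ← pow_succ']

lemma pow_mul_eq_smul_mul_pow {a x : A} {r : K} (h : a * x = r • (x * a)) (k : ℕ) :
    a ^ k * x = r ^ k • (x * a ^ k) := by
  induction k with
  | zero => simp
  | succ k ih =>
    rw [pow_succ, mul_assoc, h, mul_smul_comm, ← mul_assoc, ih, smul_mul_assoc, smul_smul,
      mul_assoc, ← pow_succ, ← pow_succ']

lemma smul_pow_smul_of_mul_eq_smul {b x : A} {t c : K} {m : M} (hbx : b * x = t • (x * b))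
    (hb : b • m = c • m) (k : ℕ) : b • (x ^ k • m) = (c * t ^ k) • (x ^ k • m) := by
  induction k with
  | zero => simpa using hb
  | succ k ih =>
    rw [pow_succ', mul_smul, ← mul_smul b, hbx, smul_assoc, mul_smul, ih, smul_comm x, smul_smul,
      ← mul_smul x, ← pow_succ']
    congr 1
    ring

lemma smul_pow_succ_smul_eq_geom_sum {b x y : A} {s c γ : K} {m : M}
    (hbx : b * x = s ^ 2 • (x * b)) (hyx : y * x = s • (x * y) + (b - algebraMap K A γ))
    (hy : y • m = 0) (hb : b • m = c • m) (v : ℕ) :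
    y • (x ^ (v + 1) • m) = ((∑ k ∈ range (v + 1), s ^ k) * (c * s ^ v - γ)) • (x ^ v • m) := by
  induction v with
  | zero =>
    rw [pow_one, ← mul_smul, hyx, add_smul, sub_smul, smul_assoc, mul_smul, hy, smul_zero,
      smul_zero, zero_add, hb, algebraMap_smul, ← sub_smul]
    simp
  | succ v ih =>
    have hstep : y • (x ^ (v + 2) • m)
        = (s * ((∑ k ∈ range (v + 1), s ^ k) * (c * s ^ v - γ)) + (c * (s ^ 2) ^ (v + 1) - γ))
          • (x ^ (v + 1) • m) := by
      rw [pow_succ', mul_smul, ← mul_smul y, hyx, add_smul, sub_smul, smul_assoc, mul_smul x,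
        ih, smul_comm x, ← mul_smul x, ← pow_succ', smul_pow_smul_of_mul_eq_smul hbx hb,
        algebraMap_smul, ← sub_smul, smul_smul, ← add_smul]
    rw [hstep]
    congr 1
    linear_combination γ * (geom_sum_succ (x := s) (n := v + 1))
      - c * s ^ (v + 1) * (geom_sum_succ' (x := s) (n := v + 1))

end Lowering

lemma eq_zero_of_mul_eq_zero_of_pow_eq_one {R : Type*} [Ring R] {x a : R} {n : ℕ}
    (ha : a ^ n = 1) (hx : x ^ n = 0) (hxa : x * a = 0) : x = 0 := by
  rcases eq_or_ne n 0 with rfl | hn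
  · simpa using congrArg (x * ·) hx
  · exact (IsUnit.of_pow_eq_one ha hn).mul_left_eq_zero.mp hxa

/-- For `q = 0` the hypotheses force `x = 0`, so the identity holds with `0⁻¹ = 0` as well. -/
lemma mul_eq_inv_smul_mul {K A : Type*} [Field K] [Ring A] [Algebra K A] {a x : A} {q : K}
    {n : ℕ} (hxa : x * a = q • (a * x)) (ha : a ^ n = 1) (hx : x ^ n = 0) :
    a * x = q⁻¹ • (x * a) := by
  rcases eq_or_ne q 0 with rfl | hq
  · simp [eq_zero_of_mul_eq_zero_of_pow_eq_one ha hx (by simpa using hxa)]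
  · rw [hxa, smul_smul, inv_mul_cancel₀ hq, one_smul]

lemma geom_sum_eq_one_sub_div {K : Type*} [Field K] {s : K} (hs : s ≠ 1) (n : ℕ) :
    ∑ k ∈ range n, s ^ k = (1 - s ^ n) / (1 - s) := by
  rw [geom_sum_eq hs, ← neg_div_neg_eq, neg_sub, neg_sub]

theorem stmt12_general {K A : Type*} [Field K] [Ring A] [Algebra K A]
    (n n₁ : ℕ) (q : K) (hq : q ^ n₁ ≠ 1) (γ : K)
    (a' x' y' : A)
    (hxa : x' * a' = q • (a' * x'))
    (han : a' ^ n = 1) (hxn : x' ^ n = 0)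
    (hyx : y' * x' - (q⁻¹) ^ n₁ • (x' * y') = a' ^ (2 * n₁) - algebraMap K A γ)
    (M : Type*) [AddCommGroup M] [Module A M] [Module K M] [IsScalarTower K A M]
    (m₀ : M) (i : ℕ) (hy0 : y' • m₀ = 0) (ha0 : a' • m₀ = (q ^ i) • m₀) :
    ∀ u : ℕ, 1 ≤ u →
      y' • ((x' ^ u) • m₀)
        = (((1 - (q⁻¹) ^ (u * n₁)) / (1 - (q⁻¹) ^ n₁))
            * (q ^ ((2 * (i : ℤ) - u + 1) * n₁) - γ)) • ((x' ^ (u - 1)) • m₀) := by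
  intro u hu
  obtain ⟨v, rfl⟩ : ∃ v, u = v + 1 := ⟨u - 1, by omega⟩
  set s := q⁻¹ ^ n₁ with hs_def
  have hs : s ≠ 1 := by rwa [hs_def, inv_pow, Ne, inv_eq_one]
  have hbx : a' ^ (2 * n₁) * x' = s ^ 2 • (x' * a' ^ (2 * n₁)) := by
    rw [pow_mul_eq_smul_mul_pow (mul_eq_inv_smul_mul hxa han hxn), ← pow_mul, mul_comm]
  have hyx' : y' * x' = s • (x' * y') + (a' ^ (2 * n₁) - algebraMap K A γ) := by
    rw [← hyx, add_sub_cancel]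
  have hcoeff : ((q ^ i) ^ (2 * n₁) * s ^ v) • (x' ^ v • m₀)
      = q ^ ((2 * (i : ℤ) - (v + 1 : ℕ) + 1) * n₁) • (x' ^ v • m₀) := by
    have hexp : (2 * (i : ℤ) - (v + 1 : ℕ) + 1) * n₁
        = ((i * (2 * n₁) : ℕ) : ℤ) - ((n₁ * v : ℕ) : ℤ) := by
      push_cast
      ring
    rw [hexp, hs_def, ← pow_mul, ← pow_mul]
    -- at `q = 0` the two scalars differ when `0 < v = 2 * i`, but then `x' = 0`
    rcases eq_or_ne q 0 with rfl | hq0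
    · rcases v with _ | v
      · rw [mul_zero, pow_zero, mul_one, Nat.cast_zero, sub_zero, zpow_natCast]
      · simp [eq_zero_of_mul_eq_zero_of_pow_eq_one han hxn (by simpa using hxa)]
    · rw [zpow_sub₀ hq0, zpow_natCast, zpow_natCast, div_eq_mul_inv, inv_pow]
  rw [smul_pow_succ_smul_eq_geom_sum hbx hyx' hy0 (pow_smul_of_smul_eq ha0 _) v,
    geom_sum_eq_one_sub_div hs, Nat.add_sub_cancel, mul_smul, mul_smul, sub_smul, sub_smul, hcoeff,
    hs_def, ← pow_mul, mul_comm n₁]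

/-- The action formula
`y' x'^u m₀ = ((1 - q^{-u n₁})/(1 - q^{-n₁})) (q^{(2i-u+1)n₁} - γ) x'^{u-1} m₀`. -/
theorem stmt12 {K A : Type*} [Field K] [Ring A] [Algebra K A]
    (n n₁ : ℕ) (q : K) (hq : q ^ n₁ ≠ 1) (γ : K)
    (a' x' y' : A)
    (hxa : x' * a' = q • (a' * x')) (hya : y' * a' = q⁻¹ • (a' * y'))
    (han : a' ^ n = 1) (hxn : x' ^ n = 0) (hyn : y' ^ n = 0)
    (hyx : y' * x' - (q⁻¹) ^ n₁ • (x' * y') = a' ^ (2 * n₁) - algebraMap K A γ)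
    (M : Type*) [AddCommGroup M] [Module A M] [Module K M] [IsScalarTower K A M]
    (m₀ : M) (i : ℕ) (hy0 : y' • m₀ = 0) (ha0 : a' • m₀ = (q ^ i) • m₀) :
    ∀ u : ℕ, 1 ≤ u →
      y' • ((x' ^ u) • m₀)
        = (((1 - (q⁻¹) ^ (u * n₁)) / (1 - (q⁻¹) ^ n₁))
            * (q ^ ((2 * (i : ℤ) - u + 1) * n₁) - γ)) • ((x' ^ (u - 1)) • m₀) :=
  stmt12_general n n₁ q hq γ a' x' y' hxa han hxn hyx M m₀ i hy0 ha0
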